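/- arXiv:1704.05254 — 2 statements merged into one kernel-verified Lean document; each statement's English description precedes it below -/
import Mathlib

section
/- There is a constant c such that for all n ≥ 1 and k ≥ 1 there exists an SL-HR grammar G with val(G) isomorphic to g_{n,k} and |G| ≤ c·(k² + n). (This is the existence content of the claim that gRePair, when the allowed maximal rank is at least k, produces for g_{n,k} a grammar of size O(k² + n).) -/
open scoped Classical

/-- A hypergraph over a label type `L`: nodes and edges are natural-number
identifiers, `att` gives the attachment sequence of an edge, `lab` its label,
and `ext` is the sequence of external nodes. -/
structure HGraph (L : Type) where
  V : Finset ℕ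
  E : Finset ℕ
  att : ℕ → List ℕ
  lab : ℕ → L
  ext : List ℕ

namespace HGraph

variable {L : Type}

/-- Well-formedness of a hypergraph over a ranked alphabet `rk`:
nodes nonempty, attachments are nonempty repetition-free sequences of nodes
whose length is the rank of the label, and the external nodes form a
repetition-free sequence of nodes. -/
def WF (rk : L → ℕ) (g : HGraph L) : Prop :=
  g.V.Nonempty ∧
    (∀ e ∈ g.E, (∀ v ∈ g.att e, v ∈ g.V) ∧ (g.att e).Nodup ∧
      (g.att e).length = rk (g.lab e) ∧ g.att e ≠ []) ∧
    (∀ v ∈ g.ext, v ∈ g.V) ∧ g.ext.Nodup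

/-- The edge size `|g|_E`: simple edges (rank ≤ 2) count 1, a hyperedge of
rank `n > 2` counts `n`. -/
def esize (g : HGraph L) : ℕ :=
  ∑ e ∈ g.E, (if (g.att e).length ≤ 2 then 1 else (g.att e).length)

/-- The size `|g| = |g|_V + |g|_E`. -/
def size (g : HGraph L) : ℕ := g.V.card + g.esize

/-- Isomorphism of hypergraphs: bijections on nodes and edges preserving
attachment, labels and external nodes. -/
def Isomorphic (g h : HGraph L) : Prop :=
  ∃ f fe : ℕ → ℕ,
    Set.BijOn f ↑g.V ↑h.V ∧ Set.BijOn fe ↑g.E ↑h.E ∧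
    (∀ e ∈ g.E, h.att (fe e) = (g.att e).map f) ∧
    (∀ e ∈ g.E, h.lab (fe e) = g.lab e) ∧
    h.ext = g.ext.map f

end HGraph

/-- `IsReplacement g e₀ h g'` holds if `g'` is (a realization of) the
replacement `g[e₀/h]`: the edge `e₀` is removed from `g`, a disjoint copy of
`h` (renamed via `ρ` on nodes and `η` on edges) is adjoined, and the i-th
external node of `h` is identified with the i-th attachment node of `e₀`. -/
def IsReplacement {L : Type} (g : HGraph L) (e₀ : ℕ) (h : HGraph L)
    (g' : HGraph L) : Prop :=
  ∃ ρ η : ℕ → ℕ,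
    Set.InjOn ρ ↑h.V ∧ Set.InjOn η ↑h.E ∧
    (∀ v ∈ h.V, v ∉ h.ext → ρ v ∉ g.V) ∧
    h.ext.map ρ = g.att e₀ ∧
    (∀ e ∈ h.E, η e ∉ g.E) ∧
    g'.V = g.V ∪ h.V.image ρ ∧
    g'.E = g.E.erase e₀ ∪ h.E.image η ∧
    (∀ e ∈ g.E.erase e₀, g'.att e = g.att e ∧ g'.lab e = g.lab e) ∧
    (∀ e ∈ h.E, g'.att (η e) = (h.att e).map ρ ∧ g'.lab (η e) = h.lab e) ∧
    g'.ext = g.ext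

/-- An HR grammar over a terminal alphabet `T`: nonterminals are natural
numbers (`NT`), `rkN` gives their ranks, `rhs` the unique right-hand side of
each nonterminal, and `S` is the start graph.  Labels of graphs occurring in
the grammar are `T ⊕ ℕ` (terminals on the left, nonterminals on the right). -/
structure HRGrammar (T : Type) where
  NT : Finset ℕ
  rkN : ℕ → ℕ
  rhs : ℕ → HGraph (T ⊕ ℕ)
  S : HGraph (T ⊕ ℕ)

namespace HRGrammar

variable {T : Type}

/-- The rank function on labels `T ⊕ ℕ` induced by terminal ranks `rkT`. -/
def rk (G : HRGrammar T) (rkT : T → ℕ) : T ⊕ ℕ → ℕ := Sum.elim rkT G.rkN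

/-- Well-formedness of an HR grammar over ranked alphabet `rkT`:
all ranks are ≥ 1, the start graph and all right-hand sides are well-formed,
`rank(A) = rank(rhs A)` for all nonterminals, and all nonterminal labels
occurring in the grammar are declared nonterminals. -/
def WF (G : HRGrammar T) (rkT : T → ℕ) : Prop :=
  (∀ a : T, 1 ≤ rkT a) ∧ (∀ A ∈ G.NT, 1 ≤ G.rkN A) ∧
    G.S.WF (G.rk rkT) ∧
    (∀ A ∈ G.NT, (G.rhs A).WF (G.rk rkT) ∧ (G.rhs A).ext.length = G.rkN A) ∧
    (∀ e ∈ G.S.E, ∀ B : ℕ, G.S.lab e = Sum.inr B → B ∈ G.NT) ∧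
    (∀ A ∈ G.NT, ∀ e ∈ (G.rhs A).E, ∀ B : ℕ, (G.rhs A).lab e = Sum.inr B → B ∈ G.NT)

/-- The dependency relation: `dep G A B` iff a `B`-labeled edge occurs in
`rhs(A)`. -/
def dep (G : HRGrammar T) (A B : ℕ) : Prop :=
  A ∈ G.NT ∧ B ∈ G.NT ∧ ∃ e ∈ (G.rhs A).E, (G.rhs A).lab e = Sum.inr B

/-- Straight-line condition: the dependency relation is acyclic, and every
nonterminal occurs in some derivation from the start graph (i.e., it is
reachable, via dependencies, from a nonterminal occurring in `S`).  (Every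
nonterminal has exactly one rule by construction, since `rhs` is a
function.) -/
def SL (G : HRGrammar T) : Prop :=
  (∀ A : ℕ, ¬ Relation.TransGen G.dep A A) ∧
    (∀ A ∈ G.NT, ∃ B : ℕ, (∃ e ∈ G.S.E, G.S.lab e = Sum.inr B) ∧
      Relation.ReflTransGen G.dep B A)

/-- One derivation step: replace some nonterminal edge by its right-hand
side. -/
def Derive (G : HRGrammar T) (g g' : HGraph (T ⊕ ℕ)) : Prop :=
  ∃ e ∈ g.E, ∃ A ∈ G.NT, g.lab e = Sum.inr A ∧ IsReplacement g e (G.rhs A) g'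

/-- A graph is terminal if all its edge labels are terminal symbols. -/
def Terminal (g : HGraph (T ⊕ ℕ)) : Prop :=
  ∀ e ∈ g.E, ∃ a : T, g.lab e = Sum.inl a

/-- The language of the grammar: all terminal graphs derivable from `S`. -/
def Lang (G : HRGrammar T) : Set (HGraph (T ⊕ ℕ)) :=
  { g | Relation.ReflTransGen G.Derive G.S g ∧ Terminal g }

/-- The size `|G| = |S| + Σ_{(A,g) ∈ P} |g|`. -/
def size (G : HRGrammar T) : ℕ :=
  G.S.size + ∑ A ∈ G.NT, (G.rhs A).size

end HRGrammar

/-- A ranked ordered tree given by its finite set `D` of Dewey addresses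
(children of `u` are `u ++ [1], …, u ++ [m]`) together with a labeling of the
addresses. -/
structure RankedTree (L : Type) where
  D : Finset (List ℕ)
  lab : List ℕ → L

namespace RankedTree

variable {L : Type}

/-- Well-formedness of a ranked tree relative to the (hypergraph) rank
function `rk` on labels: a symbol of rank `m + 1` has exactly `m` children
(a tree node labeled `σ` has children `1, …, rk σ - 1`). -/
def WF (rk : L → ℕ) (t : RankedTree L) : Prop :=
  [] ∈ t.D ∧
    (∀ (u : List ℕ) (i : ℕ), u ++ [i] ∈ t.D →
      u ∈ t.D ∧ 1 ≤ i ∧ i ≤ rk (t.lab u) - 1) ∧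
    (∀ u ∈ t.D, ∀ i : ℕ, 1 ≤ i → i ≤ rk (t.lab u) - 1 → u ++ [i] ∈ t.D)

/-- The preorder (lexicographic) position of an address among the addresses
of the tree. -/
noncomputable def pos (t : RankedTree L) (u : List ℕ) : ℕ :=
  (t.D.filter fun v => List.Lex (· < ·) v u).card

end RankedTree

/-- `IsTGraphOf rk t g` holds if `g` is the tree-graph `t-graph(t)`: one node
per tree node (numbered in preorder), one hyperedge per tree node, labeled by
the node's symbol and attached first to the node itself and then to its
children in order, the root being the unique external node. -/
def IsTGraphOf {L : Type} (rk : L → ℕ) (t : RankedTree L) (g : HGraph L) : Prop :=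
  g.V = Finset.range t.D.card ∧ g.E = Finset.range t.D.card ∧
    (∀ u ∈ t.D,
      g.att (t.pos u) =
        t.pos u :: (List.range (rk (t.lab u) - 1)).map (fun j => t.pos (u ++ [j + 1])) ∧
      g.lab (t.pos u) = t.lab u) ∧
    g.ext = [t.pos []]

/-- A hypergraph is a tree-graph if it is (isomorphic to) `t-graph(t)` for
some well-formed ranked tree `t`. -/
def IsTreeGraph {L : Type} (rk : L → ℕ) (g : HGraph L) : Prop :=
  ∃ t : RankedTree L, t.WF rk ∧
    ∃ g₀ : HGraph L, IsTGraphOf rk t g₀ ∧ g.Isomorphic g₀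

/-- The address set of the right comb `s_{n,k}`: `f_k`-nodes at addresses
`k^j` (`j < 2^n`, i.e., `replicate j k`), `a`-leaves as children `1, …, k-1`
of every `f_k`-node, plus the `k`-th child of the last `f_k`-node. -/
def combD (n k : ℕ) : Finset (List ℕ) :=
  ((Finset.range (2 ^ n)).image fun j => List.replicate j k) ∪
    ((Finset.range (2 ^ n) ×ˢ Finset.range (k - 1)).image
      fun p => List.replicate p.1 k ++ [p.2 + 1]) ∪
    {List.replicate (2 ^ n) k}

/-- The labeling of `s_{n,k}`: the comb nodes (`replicate j k`, `j < 2^n`)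
are labeled `f_k` (encoded as `true`), all other nodes are `a`-leaves
(encoded as `false`). -/
def combLab (n k : ℕ) : List ℕ → Bool ⊕ ℕ := fun u =>
  if u = List.replicate u.length k ∧ u.length < 2 ^ n then Sum.inl true
  else Sum.inl false

/-- The ranked tree `s_{n,k}` over the alphabet `{f_k, a}` (with
`f_k = true`, `a = false`). -/
def combTree (n k : ℕ) : RankedTree (Bool ⊕ ℕ) := ⟨combD n k, combLab n k⟩

/-- The (hypergraph) rank function for `g_{n,k}`: an `f_k`-labeled hyperedge
has rank `k + 1` (node plus `k` children), an `a`-labeled hyperedge has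
rank 1. -/
def combRk (k : ℕ) : Bool ⊕ ℕ → ℕ :=
  Sum.elim (fun b => if b then k + 1 else 1) fun _ => 1

/-!
The grammar has rank-2 nonterminals `A_0, …, A_n` with `A_0 → ` one `f_k`-node with its `k - 1`
leaves (its last child is the second external node) and `A_{i+1} → A_i A_i`; the start graph is
`A_n` followed by an `a`-leaf. Only the right-hand side of `A_0` has non-constant size, `O(k²)`.

Every sentential form is isomorphic to the *layout* of a word over `{f_k-block, A_0, …, A_n}`:
a path-like graph whose node `x` carries exactly one edge, the one at position `x` of the word's
cell list. The weights of the letters (`1` for a block, `2^i` for `A_i`) sum to `2^n`. Replacing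
a nonterminal edge splices the layout of the right-hand side into the cell list; the
isomorphism shifts all later positions. Every step lowers `∑ 3^letter`, so derivations
terminate, and the only terminal word is `2^n` blocks, whose layout is `t-graph(s_{n,k})` with
its nodes numbered in preorder.
-/

namespace HGraph

variable {L : Type}

structure IsIso (g h : HGraph L) (f fe : ℕ → ℕ) : Prop where
  bijOn_V : Set.BijOn f g.V h.V
  bijOn_E : Set.BijOn fe g.E h.E
  att_eq : ∀ e ∈ g.E, h.att (fe e) = (g.att e).map f
  lab_eq : ∀ e ∈ g.E, h.lab (fe e) = g.lab e
  ext_eq : h.ext = g.ext.map f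

theorem isomorphic_iff_exists_isIso {g h : HGraph L} :
    g.Isomorphic h ↔ ∃ f fe, g.IsIso h f fe :=
  ⟨fun ⟨f, fe, hV, hE, ha, hl, hx⟩ => ⟨f, fe, ⟨hV, hE, ha, hl, hx⟩⟩,
    fun ⟨f, fe, ⟨hV, hE, ha, hl, hx⟩⟩ => ⟨f, fe, hV, hE, ha, hl, hx⟩⟩

theorem Isomorphic.refl (g : HGraph L) : g.Isomorphic g :=
  ⟨id, id, Set.bijOn_id _, Set.bijOn_id _, fun _ _ => (List.map_id _).symm,
    fun _ _ => rfl, (List.map_id _).symm⟩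

theorem IsIso.terminal_iff {T : Type} {g h : HGraph (T ⊕ ℕ)} {f fe : ℕ → ℕ}
    (hiso : g.IsIso h f fe) : HRGrammar.Terminal g ↔ HRGrammar.Terminal h := by
  constructor
  · intro hg e he
    obtain ⟨e', he', rfl⟩ := hiso.bijOn_E.surjOn he
    rw [hiso.lab_eq e' he']
    exact hg e' he'
  · intro hh e he
    rw [← hiso.lab_eq e he]
    exact hh _ (hiso.bijOn_E.mapsTo he)

def Closed (g : HGraph L) : Prop :=
  (∀ e ∈ g.E, ∀ v ∈ g.att e, v ∈ g.V) ∧ ∀ v ∈ g.ext, v ∈ g.V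

end HGraph

section Glue

variable {α β γ : Type*} [Nonempty γ]

noncomputable def glueMap (s : Set α) (F : α → β) (ρ : γ → α) (T : Set γ) (φ : γ → β) :
    α → β :=
  fun v => if v ∈ s then F v else φ (Function.invFunOn ρ T v)

variable {s : Set α} {F : α → β} {ρ : γ → α} {T : Set γ} {φ : γ → β}

theorem glueMap_of_mem {v : α} (hv : v ∈ s) : glueMap s F ρ T φ v = F v := if_pos hv

theorem glueMap_apply (hρ : Set.InjOn ρ T) (hρF : ∀ u ∈ T, ρ u ∈ s → F (ρ u) = φ u)
    {u : γ} (hu : u ∈ T) : glueMap s F ρ T φ (ρ u) = φ u := by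
  unfold glueMap
  split_ifs with h
  · exact hρF u hu h
  · rw [hρ.leftInvOn_invFunOn hu]

theorem bijOn_glueMap (hF : Set.InjOn F s) (hφ : Set.InjOn φ T) (hρ : Set.InjOn ρ T)
    (hρF : ∀ u ∈ T, ρ u ∈ s → F (ρ u) = φ u) (hφF : ∀ u ∈ T, φ u ∈ F '' s → ρ u ∈ s) :
    Set.BijOn (glueMap s F ρ T φ) (s ∪ ρ '' T) (F '' s ∪ φ '' T) := by
  have himage : glueMap s F ρ T φ '' (s ∪ ρ '' T) = F '' s ∪ φ '' T := by
    rw [Set.image_union, Set.image_image, Set.image_congr fun v hv => glueMap_of_mem hv,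
      Set.image_congr fun u hu => glueMap_apply hρ hρF hu]
  rw [← himage]
  refine Set.InjOn.bijOn_image ?_
  have hcross : ∀ v ∈ s, ∀ u ∈ T, F v = φ u → v = ρ u := fun v hv u hu heq =>
    have hρu := hφF u hu ⟨v, hv, heq⟩
    hF hv hρu (heq.trans (hρF u hu hρu).symm)
  rintro v (hv | ⟨u, hu, rfl⟩) w (hw | ⟨u', hu', rfl⟩) heq
  · rw [glueMap_of_mem hv, glueMap_of_mem hw] at heq
    exact hF hv hw heq
  · rw [glueMap_of_mem hv, glueMap_apply hρ hρF hu'] at heq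
    exact hcross v hv u' hu' heq
  · rw [glueMap_of_mem hw, glueMap_apply hρ hρF hu] at heq
    exact (hcross w hw u hu heq.symm).symm
  · rw [glueMap_apply hρ hρF hu, glueMap_apply hρ hρF hu'] at heq
    rw [hφ hu hu' heq]

end Glue

theorem exists_injective_map_eq (xs l : List ℕ) (S : Finset ℕ) (hxs : xs.Nodup) (hl : l.Nodup)
    (hlen : xs.length = l.length) :
    ∃ ρ : ℕ → ℕ, Function.Injective ρ ∧ xs.map ρ = l ∧ ∀ u ∉ xs, ρ u ∉ S := by
  obtain ⟨K, hK⟩ := Finset.exists_nat_subset_range (S ∪ l.toFinset)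
  have hidx : ∀ u ∈ xs, xs.idxOf u < l.length := fun u hu =>
    hlen ▸ List.idxOf_lt_length_iff.2 hu
  let ρ : ℕ → ℕ := fun u => if hu : u ∈ xs then l[xs.idxOf u]'(hidx u hu) else K + u
  have hρlt : ∀ u ∈ xs, ρ u < K := fun u hu => by
    rw [← Finset.mem_range]
    simpa [ρ, hu] using hK (Finset.mem_union_right _ (List.mem_toFinset.2 (List.getElem_mem _)))
  have hρout : ∀ u ∉ xs, ρ u = K + u := fun u hu => dif_neg hu
  refine ⟨ρ, fun u v huv => ?_, ?_, fun u hu hS => ?_⟩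
  · by_cases hu : u ∈ xs <;> by_cases hv : v ∈ xs
    · simpa [ρ, hu, hv, hl.getElem_inj_iff, List.idxOf_inj hu] using huv
    · have := hρlt u hu
      rw [huv, hρout v hv] at this
      omega
    · have := hρlt v hv
      rw [← huv, hρout u hu] at this
      omega
    · rw [hρout u hu, hρout v hv] at huv
      omega
  · refine List.ext_getElem (by rw [List.length_map, hlen]) fun i hi _ => ?_
    simp [ρ, hxs.idxOf_getElem]
  · have := Finset.mem_range.1 (hK (Finset.mem_union_left _ hS))
    rw [hρout u hu] at this
    omega

namespace IsReplacement

variable {L : Type} {g h g' : HGraph L} {e₀ : ℕ}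

theorem closed (hrep : IsReplacement g e₀ h g') (hg : g.Closed) (hh : h.Closed) :
    g'.Closed := by
  obtain ⟨ρ, η, -, -, -, -, -, hV', hE', hgatt, hhatt, hext'⟩ := hrep
  refine ⟨fun e he v hv => ?_, fun v hv => ?_⟩
  · rw [hE', Finset.mem_union, Finset.mem_image] at he
    rw [hV', Finset.mem_union, Finset.mem_image]
    rcases he with he | ⟨e', he', rfl⟩
    · rw [(hgatt e he).1] at hv
      exact Or.inl (hg.1 e (Finset.mem_of_mem_erase he) v hv)
    · rw [(hhatt e' he').1, List.mem_map] at hv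
      obtain ⟨u, hu, rfl⟩ := hv
      exact Or.inr ⟨u, hh.1 e' he' u hu, rfl⟩
  · rw [hext'] at hv
    rw [hV']
    exact Finset.mem_union_left _ (hg.2 v hv)

/-- `g[e₀/h]` is isomorphic to any `t` glued from a copy of `g` without `e₀` (via `F`, `E`) and a
copy of `h` (via `φ`, `ψ`) that overlap exactly in the images of the external nodes of `h`. -/
theorem isomorphic_of_glue {t : HGraph L} (hrep : IsReplacement g e₀ h g') (hg : g.Closed)
    (hh : h.Closed) (he₀ : e₀ ∈ g.E) {F φ E ψ : ℕ → ℕ} (hF : Set.InjOn F g.V)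
    (hφ : Set.InjOn φ h.V) (hV : (t.V : Set ℕ) = F '' g.V ∪ φ '' h.V)
    (hφF : ∀ u ∈ h.V, φ u ∈ F '' g.V → u ∈ h.ext) (hext₀ : h.ext.map φ = (g.att e₀).map F)
    (hE : Set.InjOn E (g.E.erase e₀)) (hψ : Set.InjOn ψ h.E)
    (hEt : (t.E : Set ℕ) = E '' (g.E.erase e₀) ∪ ψ '' h.E)
    (hEψ : ∀ e ∈ g.E.erase e₀, ∀ e' ∈ h.E, E e ≠ ψ e')
    (hold : ∀ e ∈ g.E.erase e₀, t.att (E e) = (g.att e).map F ∧ t.lab (E e) = g.lab e)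
    (hnew : ∀ e ∈ h.E, t.att (ψ e) = (h.att e).map φ ∧ t.lab (ψ e) = h.lab e)
    (hext : t.ext = g.ext.map F) : g'.Isomorphic t := by
  obtain ⟨ρ, η, hρ, hη, hρfresh, hρext, hηfresh, hV', hE', hgatt, hhatt, hext'⟩ := hrep
  have hρF : ∀ u ∈ h.V, ρ u ∈ g.V → F (ρ u) = φ u := fun u hu hρu => by
    rw [← hρext, List.map_map, eq_comm, List.map_inj_left] at hext₀
    exact hext₀ u (by_contra fun hne => hρfresh u hu hne hρu)
  have hφF' : ∀ u ∈ h.V, φ u ∈ F '' g.V → ρ u ∈ g.V := fun u hu hφu =>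
    hg.1 e₀ he₀ _ (hρext ▸ List.mem_map_of_mem (hφF u hu hφu))
  have hηE : ∀ e ∈ h.E, η e ∈ g.E.erase e₀ → E (η e) = ψ e := fun e he hηe =>
    absurd (Finset.mem_of_mem_erase hηe) (hηfresh e he)
  have hψE : ∀ e ∈ h.E, ψ e ∈ E '' (g.E.erase e₀) → η e ∈ g.E.erase e₀ := by
    rintro e he ⟨e', he', heq⟩
    exact absurd heq (hEψ e' he' e he)
  set f := glueMap (g.V : Set ℕ) F ρ h.V φ
  set fe := glueMap (g.E.erase e₀ : Set ℕ) E η h.E ψ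
  have hfF : ∀ v ∈ g.V, f v = F v := fun v hv => glueMap_of_mem (Finset.mem_coe.2 hv)
  have hfρ : ∀ u ∈ h.V, f (ρ u) = φ u := fun u hu => glueMap_apply hρ hρF hu
  have hfeE : ∀ e ∈ g.E.erase e₀, fe e = E e := fun e he => glueMap_of_mem (Finset.mem_coe.2 he)
  have hfeη : ∀ e ∈ h.E, fe (η e) = ψ e := fun e he => glueMap_apply hη hηE he
  refine ⟨f, fe, ?_, ?_, fun e he => ?_, fun e he => ?_, ?_⟩
  · rw [hV', hV, Finset.coe_union, Finset.coe_image]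
    exact bijOn_glueMap hF hφ hρ hρF hφF'
  · rw [hE', hEt, Finset.coe_union, Finset.coe_image]
    exact bijOn_glueMap hE hψ hη hηE hψE
  · rw [hE', Finset.mem_union, Finset.mem_image] at he
    rcases he with he | ⟨e', he', rfl⟩
    · rw [hfeE e he, (hold e he).1, (hgatt e he).1]
      exact List.map_congr_left fun v hv =>
        (hfF v (hg.1 e (Finset.mem_of_mem_erase he) v hv)).symm
    · rw [hfeη e' he', (hnew e' he').1, (hhatt e' he').1, List.map_map]
      exact List.map_congr_left fun u hu => (hfρ u (hh.1 e' he' u hu)).symm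
  · rw [hE', Finset.mem_union, Finset.mem_image] at he
    rcases he with he | ⟨e', he', rfl⟩
    · rw [hfeE e he, (hold e he).2, (hgatt e he).2]
    · rw [hfeη e' he', (hnew e' he').2, (hhatt e' he').2]
  · rw [hext, hext']
    exact List.map_congr_left fun v hv => (hfF v (hg.2 v hv)).symm

end IsReplacement

theorem exists_isReplacement {L : Type} (g : HGraph L) (e₀ : ℕ) (h : HGraph L)
    (hatt : (g.att e₀).Nodup) (hext : h.ext.Nodup) (hlen : h.ext.length = (g.att e₀).length) :
    ∃ g', IsReplacement g e₀ h g' := by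
  obtain ⟨ρ, hρ, hρext, hρfresh⟩ := exists_injective_map_eq h.ext (g.att e₀) g.V hext hatt hlen
  obtain ⟨K, hK⟩ := Finset.exists_nat_subset_range g.E
  have hfresh : ∀ e, K + e ∉ g.E := fun e he => by
    have := Finset.mem_range.1 (hK he)
    omega
  refine ⟨⟨g.V ∪ h.V.image ρ, g.E.erase e₀ ∪ h.E.image (K + ·),
    fun e => if e ∈ g.E then g.att e else (h.att (e - K)).map ρ,
    fun e => if e ∈ g.E then g.lab e else h.lab (e - K), g.ext⟩,
    ρ, (K + ·), hρ.injOn, (add_right_injective K).injOn, fun u _ hu => hρfresh u hu, hρext,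
    fun e _ => hfresh e, rfl, rfl, fun e he => ?_, fun e _ => ?_, rfl⟩
  · simp only [if_pos (Finset.mem_of_mem_erase he), and_self]
  · simp only [if_neg (hfresh e), Nat.add_sub_cancel_left, and_self]

def shiftAfter (p e x : ℕ) : ℕ := if x ≤ p then x else x + e

section ShiftAfter

variable {p d : ℕ}

theorem shiftAfter_of_le {e x : ℕ} (h : x ≤ p) : shiftAfter p e x = x := if_pos h

theorem shiftAfter_of_lt {e x : ℕ} (h : p < x) : shiftAfter p e x = x + e := if_neg (by omega)

theorem strictMono_shiftAfter (p e : ℕ) : StrictMono (shiftAfter p e) := by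
  intro x y hxy
  unfold shiftAfter
  split_ifs <;> omega

theorem shiftAfter_ne_add {x j : ℕ} (hx : x ≠ p) (hj : j < d) :
    shiftAfter p (d - 1) x ≠ p + j := by
  unfold shiftAfter
  split_ifs <;> omega

theorem eq_zero_or_of_add_mem_range_shiftAfter {u : ℕ} (hu : u ≤ d)
    (h : p + u ∈ Set.range (shiftAfter p (d - 1))) : u = 0 ∨ u = d := by
  obtain ⟨x, hx⟩ := h
  unfold shiftAfter at hx
  split_ifs at hx <;> omega

theorem image_shiftAfter_union (hd : 0 < d) {N : ℕ} (hpN : p + 1 < N) :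
    shiftAfter p (d - 1) '' Set.Iio N ∪ (p + ·) '' Set.Iio (d + 1) = Set.Iio (N + d - 1) := by
  ext y
  simp only [Set.mem_union, Set.mem_image, Set.mem_Iio]
  constructor
  · rintro (⟨x, hx, rfl⟩ | ⟨j, hj, rfl⟩)
    · unfold shiftAfter
      split_ifs <;> omega
    · omega
  · intro hy
    by_cases hyp : y ≤ p
    · exact Or.inl ⟨y, by omega, shiftAfter_of_le hyp⟩
    by_cases hyd : y ≤ p + d
    · exact Or.inr ⟨y - p, by omega, by omega⟩
    · exact Or.inl ⟨y - (d - 1), by omega, by rw [shiftAfter_of_lt (by omega)]; omega⟩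

theorem image_shiftAfter_sdiff_union (hd : 0 < d) {N : ℕ} (hpN : p < N) :
    shiftAfter p (d - 1) '' (Set.Iio N \ {p}) ∪ (p + ·) '' Set.Iio d = Set.Iio (N + d - 1) := by
  ext y
  simp only [Set.mem_union, Set.mem_image, Set.mem_Iio, Set.mem_sdiff, Set.mem_singleton_iff]
  constructor
  · rintro (⟨x, ⟨hx, -⟩, rfl⟩ | ⟨j, hj, rfl⟩)
    · unfold shiftAfter
      split_ifs <;> omega
    · omega
  · intro hy
    by_cases hyp : y < p
    · exact Or.inl ⟨y, ⟨by omega, by omega⟩, shiftAfter_of_le hyp.le⟩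
    by_cases hyd : y < p + d
    · exact Or.inr ⟨y - p, by omega, by omega⟩
    · exact Or.inl ⟨y - (d - 1), ⟨by omega, by omega⟩,
        by rw [shiftAfter_of_lt (by omega)]; omega⟩

end ShiftAfter

namespace Comb

/-- A *layout* is a list of cells; position `x` carries node `x` and the edge `x` attached to
`x, x + 1, …, x + cellArity k c`: the cell `some 0` is an `f_k`-edge, `some (i + 1)` an edge
labelled by the nonterminal `i`, and `none` an `a`-edge. -/
def cellArity (k : ℕ) : Option ℕ → ℕ
  | some 0 => k
  | some (_ + 1) => 1
  | none => 0

def cellLabel : Option ℕ → Bool ⊕ ℕ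
  | some 0 => Sum.inl true
  | some (i + 1) => Sum.inr i
  | none => Sum.inl false

def layoutAtt (k : ℕ) (L : List (Option ℕ)) (x : ℕ) : List ℕ :=
  (List.range (cellArity k (L.getD x none) + 1)).map (x + ·)

def layoutLab (L : List (Option ℕ)) (x : ℕ) : Bool ⊕ ℕ := cellLabel (L.getD x none)

def layoutGraph (k : ℕ) (L : List (Option ℕ)) : HGraph (Bool ⊕ ℕ) :=
  ⟨Finset.range L.length, Finset.range L.length, layoutAtt k L, layoutLab L, [0]⟩

def segmentGraph (k : ℕ) (M : List (Option ℕ)) : HGraph (Bool ⊕ ℕ) :=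
  ⟨Finset.range (M.length + 1), Finset.range M.length, layoutAtt k M, layoutLab M,
    [0, M.length]⟩

def Fits (k : ℕ) (L : List (Option ℕ)) : Prop :=
  ∀ x < L.length, x + cellArity k (L.getD x none) ≤ L.length

section Layout

variable {k : ℕ}

theorem mem_layoutAtt {L : List (Option ℕ)} {x y : ℕ} :
    y ∈ layoutAtt k L x ↔ x ≤ y ∧ y ≤ x + cellArity k (L.getD x none) := by
  simp only [layoutAtt, List.mem_map, List.mem_range]
  constructor
  · rintro ⟨j, hj, rfl⟩
    omega
  · rintro ⟨hxy, hy⟩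
    exact ⟨y - x, by omega, by omega⟩

theorem layoutAtt_nodup (L : List (Option ℕ)) (x : ℕ) : (layoutAtt k L x).Nodup :=
  List.nodup_range.map (add_right_injective x)

theorem length_layoutAtt (L : List (Option ℕ)) (x : ℕ) :
    (layoutAtt k L x).length = cellArity k (L.getD x none) + 1 := by
  simp [layoutAtt]

theorem cellLabel_eq_inr {c : Option ℕ} {B : ℕ} :
    cellLabel c = Sum.inr B ↔ c = some (B + 1) := by
  rcases c with _ | _ | c <;> simp [cellLabel]

theorem mem_of_getD_eq_some {L : List (Option ℕ)} {x c : ℕ} (h : L.getD x none = some c) :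
    some c ∈ L := by
  rw [List.getD_eq_getElem?_getD] at h
  rcases hx : L[x]? with _ | c'
  · simp [hx] at h
  · rw [hx, Option.getD_some] at h
    exact h ▸ List.mem_of_getElem? hx

theorem some_succ_mem_of_layoutLab_eq_inr {L : List (Option ℕ)} {x B : ℕ}
    (h : layoutLab L x = Sum.inr B) : some (B + 1) ∈ L :=
  mem_of_getD_eq_some (cellLabel_eq_inr.1 h)

theorem layoutAtt_map {L L' : List (Option ℕ)} {s : ℕ → ℕ} {x : ℕ}
    (hget : L'.getD (s x) none = L.getD x none)
    (hs : ∀ j ≤ cellArity k (L.getD x none), s (x + j) = s x + j) :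
    layoutAtt k L' (s x) = (layoutAtt k L x).map s := by
  rw [layoutAtt, layoutAtt, hget, List.map_map]
  exact List.map_congr_left fun j hj => (hs j (by simpa [Nat.lt_succ_iff] using hj)).symm

theorem layoutAtt_of_getD_eq_some_succ {L : List (Option ℕ)} {x B : ℕ}
    (h : L.getD x none = some (B + 1)) : layoutAtt k L x = [x, x + 1] := by
  rw [layoutAtt, h]
  rfl

theorem Fits.append {L₁ L₂ : List (Option ℕ)} (h₁ : Fits k L₁) (h₂ : Fits k L₂) :
    Fits k (L₁ ++ L₂) := by
  intro x hx
  rw [List.length_append] at hx ⊢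
  rcases Nat.lt_or_ge x L₁.length with hx₁ | hx₁
  · rw [List.getD_append _ _ _ _ hx₁]
    have := h₁ x hx₁
    omega
  · rw [List.getD_append_right _ _ _ _ hx₁]
    have := h₂ (x - L₁.length) (by omega)
    omega

theorem Fits.closed_segmentGraph {M : List (Option ℕ)} (hM : Fits k M) :
    (segmentGraph k M).Closed := by
  refine ⟨fun x hx y hy => ?_, fun y hy => ?_⟩
  · simp only [segmentGraph, Finset.mem_range] at hx ⊢
    have := hM x hx
    have := mem_layoutAtt.1 hy
    omega
  · simp only [segmentGraph, List.mem_cons, List.not_mem_nil, or_false] at hy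
    simp only [segmentGraph, Finset.mem_range]
    omega

theorem Fits.closed_layoutGraph {P : List (Option ℕ)} (hP : Fits k P) :
    (layoutGraph k (P ++ [none])).Closed := by
  refine ⟨fun x hx y hy => ?_, fun y hy => ?_⟩
  · simp only [layoutGraph, Finset.mem_range, List.length_append, List.length_singleton]
      at hx ⊢
    have hy := mem_layoutAtt.1 hy
    rcases Nat.lt_or_ge x P.length with hxP | hxP
    · rw [List.getD_append _ _ _ _ hxP] at hy
      have := hP x hxP
      omega
    · rw [show x = P.length by omega, List.getD_append_right _ _ _ _ le_rfl, Nat.sub_self] at hy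
      simp only [List.getD_cons_zero, cellArity] at hy
      omega
  · simp only [layoutGraph, List.mem_singleton] at hy
    simp [layoutGraph, hy]

theorem Fits.wf_segmentGraph {rk : Bool ⊕ ℕ → ℕ} (hrk : ∀ c, rk (cellLabel c) = cellArity k c + 1)
    {M : List (Option ℕ)} (hM : Fits k M) (hM₀ : M ≠ []) : (segmentGraph k M).WF rk := by
  have hM₀' := List.length_pos_iff.2 hM₀
  refine ⟨⟨0, by simp [segmentGraph]⟩, fun e he => ⟨hM.closed_segmentGraph.1 e he,
    layoutAtt_nodup M e, ?_, ?_⟩, hM.closed_segmentGraph.2, ?_⟩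
  · simp [segmentGraph, layoutLab, length_layoutAtt, hrk]
  · simp [segmentGraph, ← List.length_pos_iff, length_layoutAtt]
  · simp [segmentGraph]
    omega

theorem Fits.wf_layoutGraph {rk : Bool ⊕ ℕ → ℕ} (hrk : ∀ c, rk (cellLabel c) = cellArity k c + 1)
    {P : List (Option ℕ)} (hP : Fits k P) : (layoutGraph k (P ++ [none])).WF rk := by
  refine ⟨⟨0, by simp [layoutGraph]⟩, fun e he => ⟨hP.closed_layoutGraph.1 e he,
    layoutAtt_nodup _ e, ?_, ?_⟩, hP.closed_layoutGraph.2, by simp [layoutGraph]⟩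
  · simp [layoutGraph, layoutLab, length_layoutAtt, hrk]
  · simp [layoutGraph, ← List.length_pos_iff, length_layoutAtt]

end Layout

section Splice

variable {k : ℕ} {P M Q : List (Option ℕ)} {c : Option ℕ}

theorem getD_splice (hM : M ≠ []) {x : ℕ} (hx : x ≠ P.length) :
    (P ++ M ++ Q).getD (shiftAfter P.length (M.length - 1) x) none = (P ++ c :: Q).getD x none := by
  have hM' := List.length_pos_iff.2 hM
  rcases Nat.lt_or_gt_of_ne hx with hxP | hxP
  · rw [shiftAfter_of_le hxP.le, List.append_assoc, List.getD_append _ _ _ _ hxP,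
      List.getD_append _ _ _ _ hxP]
  · rw [shiftAfter_of_lt hxP, List.getD_append_right _ _ _ _ (by simp; omega),
      List.getD_append_right _ _ _ _ hxP.le, List.length_append,
      show x - P.length = x - P.length - 1 + 1 by omega, List.getD_cons_succ]
    congr 1
    omega

theorem getD_append_add {j : ℕ} (hj : j < M.length) :
    (P ++ M ++ Q).getD (P.length + j) none = M.getD j none := by
  rw [List.append_assoc, List.getD_append_right _ _ _ _ (by omega), Nat.add_sub_cancel_left,
    List.getD_append _ _ _ _ hj]

theorem layoutGraph_splice_old (hP : Fits k P) (hM : M ≠ []) {x : ℕ} (hx : x ≠ P.length) :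
    (layoutGraph k (P ++ M ++ Q)).att (shiftAfter P.length (M.length - 1) x) =
        ((layoutGraph k (P ++ c :: Q)).att x).map (shiftAfter P.length (M.length - 1)) ∧
      (layoutGraph k (P ++ M ++ Q)).lab (shiftAfter P.length (M.length - 1) x) =
        (layoutGraph k (P ++ c :: Q)).lab x := by
  refine ⟨layoutAtt_map (getD_splice hM hx) fun j hj => ?_, congrArg cellLabel (getD_splice hM hx)⟩
  rcases Nat.lt_or_gt_of_ne hx with hxP | hxP
  · rw [List.getD_append _ _ _ _ hxP] at hj
    have := hP x hxP
    rw [shiftAfter_of_le (by omega), shiftAfter_of_le (by omega)]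
  · rw [shiftAfter_of_lt (by omega), shiftAfter_of_lt hxP]
    omega

theorem layoutGraph_splice_new {j : ℕ} (hj : j < M.length) :
    (layoutGraph k (P ++ M ++ Q)).att (P.length + j) =
        ((segmentGraph k M).att j).map (P.length + ·) ∧
      (layoutGraph k (P ++ M ++ Q)).lab (P.length + j) = (segmentGraph k M).lab j :=
  ⟨layoutAtt_map (s := (P.length + ·)) (getD_append_add hj) fun _ _ => by omega,
    congrArg cellLabel (getD_append_add hj)⟩

theorem coe_V_layoutGraph_splice (hM : M ≠ []) (hQ : Q ≠ []) :
    ((layoutGraph k (P ++ M ++ Q)).V : Set ℕ) =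
      shiftAfter P.length (M.length - 1) '' (layoutGraph k (P ++ c :: Q)).V ∪
        (P.length + ·) '' (segmentGraph k M).V := by
  have hQ' := List.length_pos_iff.2 hQ
  simp only [layoutGraph, segmentGraph, Finset.coe_range]
  rw [image_shiftAfter_union (List.length_pos_iff.2 hM) (by simp; omega)]
  simp only [List.length_append, List.length_cons]
  congr 1
  omega

theorem coe_E_layoutGraph_splice (hM : M ≠ []) :
    ((layoutGraph k (P ++ M ++ Q)).E : Set ℕ) =
      shiftAfter P.length (M.length - 1) '' ((layoutGraph k (P ++ c :: Q)).E \ {P.length}) ∪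
        (P.length + ·) '' (segmentGraph k M).E := by
  simp only [layoutGraph, segmentGraph, Finset.coe_range]
  rw [image_shiftAfter_sdiff_union (List.length_pos_iff.2 hM) (by simp)]
  simp only [List.length_append, List.length_cons]
  congr 1
  omega

end Splice

/-- The isomorphism fixes the positions up to `P.length` and shifts the later ones by
`M.length - 1`. -/
theorem isomorphic_layoutGraph_splice {k : ℕ} {g g' : HGraph (Bool ⊕ ℕ)} {e₀ a : ℕ}
    {f fe : ℕ → ℕ} {P M Q : List (Option ℕ)}
    (hrep : IsReplacement g e₀ (segmentGraph k M) g') (hg : g.Closed) (he₀ : e₀ ∈ g.E)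
    (hiso : g.IsIso (layoutGraph k (P ++ some (a + 1) :: Q)) f fe) (hfe₀ : fe e₀ = P.length)
    (hP : Fits k P) (hM : Fits k M) (hM₀ : M ≠ []) (hQ : Q ≠ []) :
    g'.Isomorphic (layoutGraph k (P ++ M ++ Q)) := by
  set s := shiftAfter P.length (M.length - 1)
  have hMlen := List.length_pos_iff.2 hM₀
  have hold : ∀ e ∈ g.E.erase e₀, fe e ≠ P.length := fun e he hfe =>
    Finset.ne_of_mem_erase he (hiso.bijOn_E.injOn (Finset.mem_of_mem_erase he) he₀
      (hfe.trans hfe₀.symm))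
  have hatt₀ : (g.att e₀).map f = [P.length, P.length + 1] := by
    rw [← hiso.att_eq e₀ he₀, hfe₀]
    exact layoutAtt_of_getD_eq_some_succ
      (by rw [List.getD_append_right _ _ _ _ le_rfl, Nat.sub_self]; rfl)
  refine hrep.isomorphic_of_glue hg hM.closed_segmentGraph he₀ (F := s ∘ f)
    (φ := (P.length + ·)) (E := s ∘ fe) (ψ := (P.length + ·))
    ((strictMono_shiftAfter _ _).injective.comp_injOn hiso.bijOn_V.injOn)
    (add_right_injective _).injOn ?_ (fun u hu hmem => ?_) ?_
    ((strictMono_shiftAfter _ _).injective.comp_injOn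
      (hiso.bijOn_E.injOn.mono (Finset.coe_subset.2 (Finset.erase_subset _ _))))
    (add_right_injective _).injOn ?_ (fun e he j hj => ?_) (fun e he => ?_)
    (fun j hj => layoutGraph_splice_new (Finset.mem_range.1 hj)) ?_
  · rw [Set.image_comp, hiso.bijOn_V.image_eq, coe_V_layoutGraph_splice hM₀ hQ]
  · simp only [segmentGraph, Finset.mem_range] at hu
    simpa only [segmentGraph, List.mem_cons, List.not_mem_nil, or_false] using
      eq_zero_or_of_add_mem_range_shiftAfter (by omega)
        (Set.range_comp_subset_range f s (Set.image_subset_range _ _ hmem))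
  · rw [← List.map_map, hatt₀]
    simp only [segmentGraph, List.map_cons, List.map_nil, add_zero, s,
      shiftAfter_of_le le_rfl, shiftAfter_of_lt (Nat.lt_succ_self _)]
    congr 2
    omega
  · rw [Set.image_comp, Finset.coe_erase, (hiso.bijOn_E.sdiff_singleton he₀).image_eq, hfe₀,
      coe_E_layoutGraph_splice hM₀]
  · exact shiftAfter_ne_add (hold e he) (Finset.mem_range.1 hj)
  · have he' := Finset.mem_of_mem_erase he
    obtain ⟨hatt, hlab⟩ := layoutGraph_splice_old (Q := Q) (c := some (a + 1)) hP hM₀ (hold e he)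
    rw [Function.comp_apply, hatt, hlab, hiso.att_eq e he', hiso.lab_eq e he', List.map_map]
    exact ⟨rfl, rfl⟩
  · rw [← List.map_map, ← hiso.ext_eq]
    simp [layoutGraph, s, shiftAfter_of_le (Nat.zero_le _)]

def block (k : ℕ) : ℕ → List (Option ℕ)
  | 0 => some 0 :: List.replicate (k - 1) none
  | x + 1 => [some (x + 1)]

def layout (k : ℕ) (w : List ℕ) : List (Option ℕ) := w.flatMap (block k) ++ [none]

/-- In words, the letter `0` is an `f_k`-block and `A + 1` is the nonterminal `A`;
`expansion A` is the right-hand side of `A`. -/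
def expansion : ℕ → List ℕ
  | 0 => [0]
  | B + 1 => [B + 1, B + 1]

def grammar (n k : ℕ) : HRGrammar Bool where
  NT := Finset.range (n + 1)
  rkN _ := 2
  rhs A := segmentGraph k ((expansion A).flatMap (block k))
  S := layoutGraph k (layout k [n + 1])

section Words

variable {k : ℕ}

theorem fits_flatMap_block (w : List ℕ) : Fits k (w.flatMap (block k)) := by
  induction w with
  | nil => exact fun x hx => absurd hx (by simp)
  | cons a w ih =>
    rw [List.flatMap_cons]
    refine Fits.append (fun x hx => ?_) ih
    cases a with
    | zero => cases x <;> simp_all [block, cellArity] <;> omega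
    | succ a => simp_all [block, cellArity]

theorem flatMap_block_ne_nil {w : List ℕ} (hw : w ≠ []) : w.flatMap (block k) ≠ [] := by
  obtain ⟨a, w, rfl⟩ := List.exists_cons_of_ne_nil hw
  cases a <;> simp [block]

theorem flatMap_block_expansion_ne_nil (A : ℕ) : (expansion A).flatMap (block k) ≠ [] :=
  flatMap_block_ne_nil (by cases A <;> simp [expansion])

theorem succ_mem_of_some_succ_mem {w : List ℕ} {B : ℕ}
    (h : some (B + 1) ∈ w.flatMap (block k)) : B + 1 ∈ w := by
  obtain ⟨a, ha, hmem⟩ := List.mem_flatMap.1 h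
  cases a with
  | zero => simp [block, List.mem_replicate] at hmem
  | succ a => simp_all [block]

theorem succ_mem_of_some_succ_mem_layout {w : List ℕ} {B : ℕ}
    (h : some (B + 1) ∈ layout k w) : B + 1 ∈ w := by
  simp only [layout, List.mem_append, List.mem_singleton, reduceCtorEq, or_false] at h
  exact succ_mem_of_some_succ_mem h

theorem eq_of_succ_mem_expansion {A B : ℕ} (h : B + 1 ∈ expansion A) : A = B + 1 := by
  cases A <;> simp_all [expansion]

end Words

section GrammarProperties

variable {n k : ℕ}

theorem grammar_rk_cellLabel (c : Option ℕ) :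
    (grammar n k).rk (fun b => if b then k + 1 else 1) (cellLabel c) = cellArity k c + 1 := by
  rcases c with _ | _ | c <;> rfl

theorem grammar_dep {A B : ℕ} (h : (grammar n k).dep A B) : A = B + 1 := by
  obtain ⟨-, -, e, -, he⟩ := h
  exact eq_of_succ_mem_expansion (succ_mem_of_some_succ_mem
    (some_succ_mem_of_layoutLab_eq_inr he))

theorem grammar_wf : (grammar n k).WF (fun b => if b then k + 1 else 1) := by
  refine ⟨fun b => by cases b <;> simp, fun _ _ => by simp [grammar],
    (fits_flatMap_block _).wf_layoutGraph grammar_rk_cellLabel,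
    fun A _ => ⟨(fits_flatMap_block _).wf_segmentGraph grammar_rk_cellLabel
      (flatMap_block_expansion_ne_nil A), rfl⟩, fun e _ B hB => ?_, fun A hA e _ B hB => ?_⟩
  · have := succ_mem_of_some_succ_mem_layout (some_succ_mem_of_layoutLab_eq_inr hB)
    simp_all [grammar]
  · have := eq_of_succ_mem_expansion (succ_mem_of_some_succ_mem
      (some_succ_mem_of_layoutLab_eq_inr hB))
    simp only [grammar, Finset.mem_range] at hA ⊢
    omega

theorem grammar_dep_succ {B : ℕ} (hB : B + 1 ≤ n) : (grammar n k).dep (B + 1) B := by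
  refine ⟨by simp [grammar]; omega, by simp [grammar]; omega, 0, ?_, rfl⟩
  simp [grammar, segmentGraph, expansion, block]

theorem grammar_reflTransGen_dep {A : ℕ} (d : ℕ) (hd : A + d ≤ n) :
    Relation.ReflTransGen (grammar n k).dep (A + d) A := by
  induction d with
  | zero => exact .refl
  | succ d ih => exact .head (grammar_dep_succ hd) (ih (by omega))

theorem grammar_sl : (grammar n k).SL := by
  refine ⟨fun A hA => ?_, fun A hA => ⟨n, ⟨0, by simp [grammar, layoutGraph, layout, block],
    rfl⟩, ?_⟩⟩
  · have : A > A := Relation.transGen_minimal (r' := (· > ·))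
      (fun A B h => by simp [grammar_dep h]) A A hA
    exact lt_irrefl A this
  · simp only [grammar, Finset.mem_range] at hA
    have := grammar_reflTransGen_dep (n := n) (k := k) (A := A) (n - A) (by omega)
    rwa [Nat.add_sub_cancel' (by omega)] at this

theorem cellArity_le (hk : 1 ≤ k) (c : Option ℕ) : cellArity k c ≤ k := by
  rcases c with _ | _ | c <;> simp [cellArity, hk]

theorem esize_segmentGraph_le (hk : 1 ≤ k) (M : List (Option ℕ)) :
    (segmentGraph k M).esize ≤ M.length * (k + 1) := by
  have hterm : ∀ e, (if (layoutAtt k M e).length ≤ 2 then 1 else (layoutAtt k M e).length) ≤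
      k + 1 := fun e => by
    have := cellArity_le hk (M.getD e none)
    rw [length_layoutAtt]
    split_ifs <;> omega
  calc (segmentGraph k M).esize ≤ ∑ _e ∈ Finset.range M.length, (k + 1) :=
        Finset.sum_le_sum fun e _ => hterm e
    _ = M.length * (k + 1) := by simp

theorem grammar_size_le (hk : 1 ≤ k) : (grammar n k).size ≤ 8 * (k ^ 2 + n) := by
  have hS : (grammar n k).S.size = 4 := by
    simp [grammar, HGraph.size, HGraph.esize, layoutGraph, layout, block, layoutAtt,
      Finset.sum_range_succ, cellArity]
  have hdouble : ∀ B, ((grammar n k).rhs (B + 1)).size = 5 := fun B => by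
    simp [grammar, HGraph.size, HGraph.esize, segmentGraph, expansion, block, layoutAtt,
      Finset.sum_range_succ, cellArity]
  have hblock : ((grammar n k).rhs 0).size ≤ (k + 1) + k * (k + 1) := by
    have hlen : (block k 0).length = k := by simp [block]; omega
    have := esize_segmentGraph_le hk (block k 0)
    simp only [HGraph.size, grammar, expansion, List.flatMap_singleton] at this ⊢
    simp only [segmentGraph, Finset.card_range, hlen] at this ⊢
    omega
  rw [HRGrammar.size, hS, show (grammar n k).NT = Finset.range (n + 1) from rfl,
    Finset.sum_range_succ', Finset.sum_congr rfl fun B _ => hdouble B]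
  simp only [Finset.sum_const, Finset.card_range, smul_eq_mul]
  nlinarith

end GrammarProperties

/-- The number of `f_k`-blocks that a letter finally derives. -/
def weight : ℕ → ℕ
  | 0 => 1
  | x + 1 => 2 ^ x

def potential (w : List ℕ) : ℕ := (w.map (3 ^ ·)).sum

structure SententialForm (n k : ℕ) (g : HGraph (Bool ⊕ ℕ)) (w : List ℕ) : Prop where
  closed : g.Closed
  weight_sum : (w.map weight).sum = 2 ^ n
  iso : g.Isomorphic (layoutGraph k (layout k w))

section Derivations

variable {n k : ℕ} {g g' : HGraph (Bool ⊕ ℕ)} {w : List ℕ}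

theorem sum_map_weight_expansion (A : ℕ) : ((expansion A).map weight).sum = weight (A + 1) := by
  cases A <;> simp [expansion, weight, pow_succ, mul_two]

theorem sum_map_pow_expansion_lt (A : ℕ) : ((expansion A).map (3 ^ ·)).sum < 3 ^ (A + 1) := by
  cases A with
  | zero => simp [expansion]
  | succ B =>
    have : 0 < 3 ^ (B + 1) := by positivity
    simp only [expansion, List.map_cons, List.map_nil, List.sum_cons, List.sum_nil,
      pow_succ 3 (B + 1)]
    omega

theorem layout_append_cons (u v : List ℕ) (B : ℕ) :
    layout k (u ++ (B + 1) :: v) =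
      u.flatMap (block k) ++ some (B + 1) :: (v.flatMap (block k) ++ [none]) := by
  simp [layout, block]

theorem layout_append_append (u w v : List ℕ) :
    layout k (u ++ w ++ v) =
      u.flatMap (block k) ++ w.flatMap (block k) ++ (v.flatMap (block k) ++ [none]) := by
  simp [layout]

theorem getD_block_eq_some_succ {a x B : ℕ} (h : (block k a).getD x none = some (B + 1)) :
    a = B + 1 ∧ x = 0 := by
  cases a with
  | zero => simpa [block, List.mem_replicate] using mem_of_getD_eq_some h
  | succ a =>
    cases x with
    | zero => simp_all [block]
    | succ x => simp [block] at h

theorem exists_eq_append_of_getD_layout {x B : ℕ}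
    (h : (layout k w).getD x none = some (B + 1)) :
    ∃ u v, w = u ++ (B + 1) :: v ∧ (u.flatMap (block k)).length = x := by
  induction w generalizing x with
  | nil => cases x <;> simp [layout] at h
  | cons a w ih =>
    rw [layout, List.flatMap_cons, List.append_assoc] at h
    rcases Nat.lt_or_ge x (block k a).length with hx | hx
    · rw [List.getD_append _ _ _ _ hx] at h
      obtain ⟨rfl, rfl⟩ := getD_block_eq_some_succ h
      exact ⟨[], w, rfl, rfl⟩
    · rw [List.getD_append_right _ _ _ _ hx] at h
      obtain ⟨u, v, rfl, hu⟩ := ih h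
      exact ⟨a :: u, v, rfl, by simp only [List.flatMap_cons, List.length_append]; omega⟩

theorem SententialForm.start : SententialForm n k (grammar n k).S [n + 1] :=
  ⟨(fits_flatMap_block _).closed_layoutGraph, by simp [weight], .refl _⟩

theorem SententialForm.le_of_succ_mem (hI : SententialForm n k g w)
    {B : ℕ} (hB : B + 1 ∈ w) : B ≤ n := by
  have : 2 ^ B ≤ 2 ^ n := hI.weight_sum ▸ List.le_sum_of_mem (List.mem_map_of_mem hB)
  exact (Nat.pow_le_pow_iff_right (by norm_num)).1 this

theorem SententialForm.derive (hI : SententialForm n k g w)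
    (hD : (grammar n k).Derive g g') :
    ∃ w', SententialForm n k g' w' ∧ potential w' < potential w := by
  obtain ⟨e₀, he₀, A, -, hlab, hrep⟩ := hD
  obtain ⟨f, fe, hiso⟩ := HGraph.isomorphic_iff_exists_isIso.1 hI.iso
  have hcell : (layout k w).getD (fe e₀) none = some (A + 1) :=
    cellLabel_eq_inr.1 ((hiso.lab_eq e₀ he₀).trans hlab)
  obtain ⟨u, v, rfl, hp⟩ := exists_eq_append_of_getD_layout hcell
  have hweight := hI.weight_sum
  refine ⟨u ++ expansion A ++ v, ⟨hrep.closed hI.closed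
    (fits_flatMap_block _).closed_segmentGraph, ?_, ?_⟩, ?_⟩
  · simp only [List.map_append, List.sum_append, List.map_cons, List.sum_cons] at hweight ⊢
    rw [sum_map_weight_expansion]
    omega
  · rw [layout_append_cons] at hiso
    rw [layout_append_append]
    exact isomorphic_layoutGraph_splice hrep hI.closed he₀ hiso hp.symm (fits_flatMap_block u)
      (fits_flatMap_block _) (flatMap_block_expansion_ne_nil A) (by simp)
  · have := sum_map_pow_expansion_lt A
    simp only [potential, List.map_append, List.sum_append, List.map_cons, List.sum_cons]
    omega

theorem getD_layout_append_cons (u v : List ℕ) (B : ℕ) :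
    (layout k (u ++ (B + 1) :: v)).getD (u.flatMap (block k)).length none = some (B + 1) := by
  rw [layout_append_cons, List.getD_append_right _ _ _ _ le_rfl, Nat.sub_self]
  rfl

theorem SententialForm.exists_derive (hI : SententialForm n k g w)
    {B : ℕ} (hB : B + 1 ∈ w) : ∃ g', (grammar n k).Derive g g' := by
  obtain ⟨f, fe, hiso⟩ := HGraph.isomorphic_iff_exists_isIso.1 hI.iso
  obtain ⟨u, v, rfl⟩ := List.append_of_mem hB
  set p := (u.flatMap (block k)).length
  have hcell : (layout k (u ++ (B + 1) :: v)).getD p none = some (B + 1) :=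
    getD_layout_append_cons u v B
  have hpE : p ∈ (layoutGraph k (layout k (u ++ (B + 1) :: v))).E := by
    simp [layoutGraph, layout_append_cons, p]
  obtain ⟨e₀, he₀, hfe₀⟩ := hiso.bijOn_E.surjOn hpE
  have hatt : (g.att e₀).map f = [p, p + 1] := by
    rw [← hiso.att_eq e₀ he₀, hfe₀]
    exact layoutAtt_of_getD_eq_some_succ hcell
  obtain ⟨M, hM⟩ : ∃ M, (grammar n k).rhs B = segmentGraph k M ∧ M ≠ [] :=
    ⟨_, rfl, flatMap_block_expansion_ne_nil B⟩
  obtain ⟨g', hrep⟩ := exists_isReplacement g e₀ ((grammar n k).rhs B)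
    (List.Nodup.of_map f (hatt ▸ by simp))
    (by simpa [hM.1, segmentGraph] using (List.length_pos_iff.2 hM.2).ne)
    (by simpa [hM.1, segmentGraph] using (congrArg List.length hatt).symm)
  refine ⟨g', e₀, he₀, B, ?_, ?_, hrep⟩
  · simp only [grammar, Finset.mem_range]
    have := hI.le_of_succ_mem (List.mem_append_right u List.mem_cons_self)
    omega
  · rw [← hiso.lab_eq e₀ he₀, hfe₀]
    change cellLabel ((layout k _).getD p none) = _
    rw [hcell, cellLabel]

theorem terminal_layoutGraph_iff :
    HRGrammar.Terminal (layoutGraph k (layout k w)) ↔ ∀ x ∈ w, x = 0 := by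
  constructor
  · intro hT x hx
    obtain ⟨u, v, rfl⟩ := List.append_of_mem hx
    cases x with
    | zero => rfl
    | succ B =>
      obtain ⟨a, ha⟩ := hT (u.flatMap (block k)).length
        (by simp [layoutGraph, layout_append_cons])
      change cellLabel ((layout k _).getD _ none) = _ at ha
      rw [getD_layout_append_cons, cellLabel] at ha
      cases ha
  · intro hw x _
    rcases hx : layoutLab (layout k w) x with a | B
    · exact ⟨a, hx⟩
    · exact absurd (hw _ (succ_mem_of_some_succ_mem_layout
        (some_succ_mem_of_layoutLab_eq_inr hx))) (Nat.succ_ne_zero B)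

theorem SententialForm.terminal_iff (hI : SententialForm n k g w) :
    HRGrammar.Terminal g ↔ ∀ x ∈ w, x = 0 := by
  obtain ⟨f, fe, hiso⟩ := HGraph.isomorphic_iff_exists_isIso.1 hI.iso
  rw [hiso.terminal_iff, terminal_layoutGraph_iff]

theorem SententialForm.exists_terminal (hI : SententialForm n k g w) :
    ∃ g', Relation.ReflTransGen (grammar n k).Derive g g' ∧ HRGrammar.Terminal g' := by
  induction hμ : potential w using Nat.strong_induction_on generalizing g w with
  | _ μ ih =>
    by_cases hw : ∀ x ∈ w, x = 0
    · exact ⟨g, .refl, hI.terminal_iff.2 hw⟩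
    push Not at hw
    obtain ⟨x, hx, hx0⟩ := hw
    obtain ⟨B, rfl⟩ := Nat.exists_eq_succ_of_ne_zero hx0
    obtain ⟨g', hD⟩ := hI.exists_derive hx
    obtain ⟨w', hI', hlt⟩ := hI.derive hD
    obtain ⟨g'', hD', hT⟩ := ih _ (hμ ▸ hlt) hI' rfl
    exact ⟨g'', .head hD hD', hT⟩

theorem SententialForm.of_reflTransGen
    (h : Relation.ReflTransGen (grammar n k).Derive (grammar n k).S g) :
    ∃ w, SententialForm n k g w := by
  induction h with
  | refl => exact ⟨_, .start⟩
  | tail _ hD ih =>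
    obtain ⟨w, hI⟩ := ih
    obtain ⟨w', hI', -⟩ := hI.derive hD
    exact ⟨w', hI'⟩

theorem eq_replicate_of_forall_eq_zero (hw : ∀ x ∈ w, x = 0)
    (hsum : (w.map weight).sum = 2 ^ n) : w = List.replicate (2 ^ n) 0 := by
  have hw' : w = List.replicate w.length 0 := List.eq_replicate_iff.2 ⟨rfl, hw⟩
  rw [hw', List.map_replicate, List.sum_replicate] at hsum
  rw [hw']
  simp only [weight, smul_eq_mul, mul_one] at hsum
  rw [hsum]

end Derivations

/-- The Dewey address of the `m`-th node of `s_{n,k}` in preorder. -/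
def addr (k m : ℕ) : List ℕ :=
  List.replicate (m / k) k ++ if m % k = 0 then [] else [m % k]

def graph (n k : ℕ) : HGraph (Bool ⊕ ℕ) := layoutGraph k (layout k (List.replicate (2 ^ n) 0))

section CombTree

variable {n k : ℕ}

theorem exists_eq_mul_add (hk : 0 < k) (m : ℕ) : ∃ j i, i < k ∧ m = j * k + i :=
  ⟨m / k, m % k, Nat.mod_lt _ hk, by rw [Nat.mul_comm]; exact (Nat.div_add_mod m k).symm⟩

theorem addr_mul_add (hk : 0 < k) {j i : ℕ} (hi : i < k) :
    addr k (j * k + i) = List.replicate j k ++ if i = 0 then [] else [i] := by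
  have hdiv : (j * k + i) / k = j := by
    rw [Nat.add_comm, Nat.add_mul_div_right _ _ hk, Nat.div_eq_of_lt hi, Nat.zero_add]
  have hmod : (j * k + i) % k = i := by rw [Nat.mul_comm, Nat.mul_add_mod, Nat.mod_eq_of_lt hi]
  rw [addr, hdiv, hmod]

theorem addr_lt_succ (hk : 0 < k) (m : ℕ) : addr k m < addr k (m + 1) := by
  obtain ⟨j, i, hi, rfl⟩ := exists_eq_mul_add hk m
  have hlt : List.replicate j k ++ (if i = 0 then [] else [i]) <
      List.replicate j k ++ [if i + 1 < k then i + 1 else k] := by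
    refine List.Lex.append_left _ ?_ _
    split_ifs <;> first | exact List.Lex.nil | exact List.Lex.rel (by omega)
  rw [addr_mul_add hk hi]
  by_cases hik : i + 1 < k
  · rw [Nat.add_assoc, addr_mul_add hk hik, if_neg (Nat.succ_ne_zero i)]
    rwa [if_pos hik] at hlt
  · rw [show j * k + i + 1 = (j + 1) * k + 0 by rw [Nat.succ_mul]; omega,
      addr_mul_add hk hk, if_pos rfl, List.append_nil, List.replicate_succ']
    rwa [if_neg hik] at hlt

theorem strictMono_addr (hk : 0 < k) : StrictMono (addr k) :=
  strictMono_nat_of_lt_succ (addr_lt_succ hk)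

theorem addr_mul (hk : 0 < k) (j : ℕ) : addr k (j * k) = List.replicate j k := by
  simpa using addr_mul_add hk (j := j) hk

theorem addr_add_succ (hk : 0 < k) {m j : ℕ} (hm : m % k = 0) (hj : j < k) :
    addr k m ++ [j + 1] = addr k (m + j + 1) := by
  obtain ⟨q, rfl⟩ := Nat.dvd_of_mod_eq_zero hm
  rw [Nat.mul_comm, addr_mul hk]
  by_cases hjk : j + 1 < k
  · rw [Nat.add_assoc, addr_mul_add hk hjk, if_neg (Nat.succ_ne_zero j)]
  · rw [show q * k + j + 1 = (q + 1) * k by rw [Nat.succ_mul]; omega, addr_mul hk,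
      List.replicate_succ', show j + 1 = k by omega]

theorem combD_eq_image (hk : 0 < k) :
    combD n k = (Finset.range (2 ^ n * k + 1)).image (addr k) := by
  ext u
  simp only [combD, Finset.mem_union, Finset.mem_image, Finset.mem_singleton, Finset.mem_product,
    Finset.mem_range]
  constructor
  · rintro ((⟨j, hj, rfl⟩ | ⟨⟨j, i⟩, ⟨hj, hi⟩, rfl⟩) | rfl)
    · exact ⟨j * k, by nlinarith, addr_mul hk j⟩
    · dsimp only at hj hi
      have := Nat.mul_le_mul_right k (show j + 1 ≤ 2 ^ n by omega)
      rw [Nat.succ_mul] at this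
      refine ⟨j * k + (i + 1), by omega, ?_⟩
      rw [addr_mul_add hk (by omega), if_neg (Nat.succ_ne_zero i)]
    · exact ⟨2 ^ n * k, by omega, addr_mul hk _⟩
  · rintro ⟨m, hm, rfl⟩
    obtain ⟨j, i, hi, rfl⟩ := exists_eq_mul_add hk m
    rw [addr_mul_add hk hi]
    have hj : j ≤ 2 ^ n := by
      by_contra hj
      nlinarith
    rcases Nat.eq_zero_or_pos i with rfl | hi₀
    · rcases hj.lt_or_eq with hj | rfl
      · exact Or.inl (Or.inl ⟨j, hj, by simp⟩)
      · exact Or.inr (by simp)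
    · have hj : j < 2 ^ n := by
        by_contra hj'
        nlinarith
      refine Or.inl (Or.inr ⟨(j, i - 1), ⟨hj, by omega⟩, ?_⟩)
      simp only [if_neg hi₀.ne', Nat.sub_add_cancel hi₀]

theorem pos_addr (hk : 0 < k) {m : ℕ} (hm : m < 2 ^ n * k + 1) :
    (combTree n k).pos (addr k m) = m := by
  have hfilter : (combTree n k).D.filter (fun v => List.Lex (· < ·) v (addr k m)) =
      (Finset.range m).image (addr k) := by
    ext u
    simp only [combTree, combD_eq_image hk, Finset.mem_filter, Finset.mem_image, Finset.mem_range]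
    constructor
    · rintro ⟨⟨a, -, rfl⟩, hlt⟩
      exact ⟨a, (strictMono_addr hk).lt_iff_lt.1 hlt, rfl⟩
    · rintro ⟨a, ha, rfl⟩
      exact ⟨⟨a, by omega, rfl⟩, (strictMono_addr hk).lt_iff_lt.2 ha⟩
  rw [RankedTree.pos, hfilter, Finset.card_image_of_injective _ (strictMono_addr hk).injective,
    Finset.card_range]

theorem getD_layout_replicate (hk : 0 < k) (N m : ℕ) :
    (layout k (List.replicate N 0)).getD m none =
      if m % k = 0 ∧ m < N * k then some 0 else none := by
  induction N generalizing m with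
  | zero => cases m <;> simp [layout]
  | succ N ih =>
    have hlen : (block k 0).length = k := by simp [block]; omega
    rw [layout, List.replicate_succ, List.flatMap_cons, List.append_assoc]
    rcases Nat.lt_or_ge m k with hm | hm
    · rw [List.getD_append _ _ _ _ (by omega), Nat.mod_eq_of_lt hm]
      have : m < (N + 1) * k := by rw [Nat.succ_mul]; omega
      cases m <;> simp_all [block]
    · rw [List.getD_append_right _ _ _ _ (by omega), ← layout, ih, hlen,
        ← Nat.mod_eq_sub_mod hm, Nat.succ_mul]
      simp only [show m - k < N * k ↔ m < N * k + k by omega]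

theorem combLab_addr (hk : 0 < k) {m : ℕ} (hm : m ≤ 2 ^ n * k) :
    combLab n k (addr k m) =
      if m % k = 0 ∧ m < 2 ^ n * k then Sum.inl true else Sum.inl false := by
  obtain ⟨j, i, hi, rfl⟩ := exists_eq_mul_add hk m
  rw [combLab, addr_mul_add hk hi, Nat.mul_comm, Nat.mul_add_mod, Nat.mod_eq_of_lt hi]
  rcases Nat.eq_zero_or_pos i with rfl | hi₀
  · simp [Nat.mul_comm k, Nat.mul_lt_mul_right hk]
  · have hne : ¬ (List.replicate j k ++ [i] = List.replicate (j + 1) k) := by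
      rw [List.replicate_succ']
      simp only [List.append_cancel_left_eq, List.cons.injEq, and_true]
      omega
    simp [hi₀.ne', hne]

theorem graph_att_lab (hk : 0 < k) {m : ℕ} (hm : m < 2 ^ n * k + 1) :
    (graph n k).att m = m :: (List.range (combRk k ((combTree n k).lab (addr k m)) - 1)).map
        (fun j => (combTree n k).pos (addr k m ++ [j + 1])) ∧
      (graph n k).lab m = (combTree n k).lab (addr k m) := by
  have hcell := getD_layout_replicate hk (2 ^ n) m
  show layoutAtt k _ m = _ ∧ layoutLab _ m = _
  rw [show (combTree n k).lab = combLab n k from rfl, combLab_addr hk (Nat.lt_succ_iff.1 hm)]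
  by_cases h : m % k = 0 ∧ m < 2 ^ n * k
  · have hmk : m + k ≤ 2 ^ n * k := by
      obtain ⟨q, rfl⟩ := Nat.dvd_of_mod_eq_zero h.1
      have hq : q + 1 ≤ 2 ^ n := by
        by_contra hq
        nlinarith [h.2]
      nlinarith
    rw [if_pos h] at hcell ⊢
    refine ⟨?_, by rw [layoutLab, hcell]; rfl⟩
    rw [layoutAtt, hcell]
    simp only [combRk, Sum.elim_inl, if_true, Nat.add_sub_cancel, cellArity,
      List.range_succ_eq_map, List.map_cons, List.map_map, Nat.add_zero]
    congr 1
    refine List.map_congr_left fun j hj => ?_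
    rw [List.mem_range] at hj
    rw [Function.comp_apply, addr_add_succ hk h.1 hj, pos_addr hk (by omega)]
    omega
  · rw [if_neg h] at hcell ⊢
    exact ⟨by rw [layoutAtt, hcell]; rfl, by rw [layoutLab, hcell]; rfl⟩

theorem isTGraphOf_graph (hk : 0 < k) : IsTGraphOf (combRk k) (combTree n k) (graph n k) := by
  have hcard : (combTree n k).D.card = 2 ^ n * k + 1 := by
    rw [combTree, combD_eq_image hk, Finset.card_image_of_injective _
      (strictMono_addr hk).injective, Finset.card_range]
  have hlen : (layout k (List.replicate (2 ^ n) 0)).length = 2 ^ n * k + 1 := by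
    have : (block k 0).length = k := by simp [block]; omega
    simp [layout, this]
  have hroot : (combTree n k).pos [] = 0 := by
    simpa [addr] using pos_addr (n := n) hk (m := 0) (by omega)
  refine ⟨by simp [graph, layoutGraph, hlen, hcard], by simp [graph, layoutGraph, hlen, hcard],
    fun u hu => ?_, by simp [graph, layoutGraph, hroot]⟩
  rw [combTree, combD_eq_image hk, Finset.mem_image] at hu
  obtain ⟨m, hm, rfl⟩ := hu
  rw [pos_addr hk (Finset.mem_range.1 hm)]
  exact graph_att_lab hk (Finset.mem_range.1 hm)

end CombTree

theorem SententialForm.isomorphic_graph {n k : ℕ} {g : HGraph (Bool ⊕ ℕ)} {w : List ℕ}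
    (hI : SententialForm n k g w) (hT : HRGrammar.Terminal g) : g.Isomorphic (graph n k) := by
  obtain rfl := eq_replicate_of_forall_eq_zero (hI.terminal_iff.1 hT) hI.weight_sum
  exact hI.iso

end Comb

/-- There is a constant `c` such that for all `n, k ≥ 1`
there is an SL-HR grammar `G` with `val(G)` isomorphic to
`g_{n,k} = t-graph(s_{n,k})` and `|G| ≤ c·(k² + n)`. -/
theorem comb_has_small_grammar :
    ∃ c : ℕ, ∀ n k : ℕ, 1 ≤ n → 1 ≤ k →
      ∃ G : HRGrammar Bool,
        G.WF (fun b => if b then k + 1 else 1) ∧ G.SL ∧ G.Lang.Nonempty ∧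
        (∀ g ∈ G.Lang, ∃ g₀ : HGraph (Bool ⊕ ℕ),
          IsTGraphOf (combRk k) (combTree n k) g₀ ∧ g.Isomorphic g₀) ∧
        G.size ≤ c * (k ^ 2 + n) := by
  refine ⟨8, fun n k _ hk => ⟨Comb.grammar n k, Comb.grammar_wf, Comb.grammar_sl, ?_,
    fun g hg => ?_, Comb.grammar_size_le hk⟩⟩
  · obtain ⟨g, hD, hT⟩ := Comb.SententialForm.start.exists_terminal
    exact ⟨g, hD, hT⟩
  · obtain ⟨w, hI⟩ := Comb.SententialForm.of_reflTransGen hg.1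
    exact ⟨Comb.graph n k, Comb.isTGraphOf_graph hk, hI.isomorphic_graph hg.2⟩
end

section
/- Define the triangle fractal graphs by: tf₁ is the complete graph on 3 nodes; and for i ≥ 1, tf_{i+1} is obtained from tf_i by letting X be the set of edges of tf_i incident with at least one node of degree 2 and, for each edge e ∈ X, adding a fresh node v_e together with two new edges joining v_e to the two endpoints of e. Then for every n ≥ 1, tf_n has exactly 2^n + 2^{n−1} nodes and exactly 2·(2^n + 2^{n−1}) − 3 edges. -/
/-- A finite graph: a finite set of nodes and a finite set of edges, each
edge being a two-element set of nodes. -/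
structure FGraph where
  V : Finset ℕ
  E : Finset (Finset ℕ)

namespace FGraph

/-- Well-formedness: every edge joins two distinct nodes of the graph. -/
def WF (g : FGraph) : Prop := ∀ e ∈ g.E, e.card = 2 ∧ e ⊆ g.V

/-- The degree of a node: the number of edges incident with it. -/
def degree (g : FGraph) (v : ℕ) : ℕ := (g.E.filter fun e => v ∈ e).card

/-- The set `X` of edges incident with at least one node of degree 2. -/
def tfX (g : FGraph) : Finset (Finset ℕ) :=
  g.E.filter fun e => ∃ v ∈ e, g.degree v = 2

/-- One triangle-fractal step: for each edge `e` incident with a node of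
degree 2, add a fresh node `ν e` together with two new edges joining `ν e`
to the two endpoints of `e`. -/
def TFStep (g g' : FGraph) : Prop :=
  ∃ ν : Finset ℕ → ℕ,
    Set.InjOn ν ↑g.tfX ∧ (∀ e ∈ g.tfX, ν e ∉ g.V) ∧
    g'.V = g.V ∪ g.tfX.image ν ∧
    g'.E = g.E ∪ g.tfX.biUnion fun e => e.image fun v => insert (ν e) {v}

end FGraph

/-- `IsTF n g`: `g` is the triangle fractal `tf_n`; `tf₁` is the complete
graph on 3 nodes, and `tf_{i+1}` is obtained from `tf_i` by a
triangle-fractal step. -/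
inductive IsTF : ℕ → FGraph → Prop
  | base (g : FGraph) (hV : g.V = {0, 1, 2})
      (hE : g.E = {({0, 1} : Finset ℕ), {0, 2}, {1, 2}}) : IsTF 1 g
  | step (n : ℕ) (g g' : FGraph) (h : IsTF n g) (hs : FGraph.TFStep g g') :
      IsTF (n + 1) g'

/-!
Call a well-formed graph *good* if all its nodes have degree at least 2, and let `X` be its set
of edges at a node of degree 2. A step keeps the graph good, every new node has degree 2, and
every old node ends with degree different from 2: it either had degree at least 3, or had
degree 2 and gains the two new edges built on its two edges. Hence the edges at a node of
degree 2 after the step are exactly the `2|X|` new edges, so `|X|` doubles while `|V|` grows by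
`|X|` and `|E|` by `2|X|`. Starting from the triangle, where `|X| = |V| = |E| = 3`, induction
gives `2|X| = 3·2ⁿ`, `|V| = |X|` and `|E| + 3 = 2|V|`.
-/

theorem Finset.eq_and_eq_of_pair_eq_pair {α : Type*} [DecidableEq α] {a b v w : α}
    (h : ({a, v} : Finset α) = {b, w}) (haw : a ≠ w) : a = b ∧ v = w := by
  have h' := congrArg ((↑) : Finset α → Set α) h
  push_cast at h'
  rcases Set.pair_eq_pair_iff.1 h' with hab | ⟨rfl, rfl⟩
  · exact hab
  · exact absurd rfl haw

namespace FGraph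

variable {g : FGraph} {ν : Finset ℕ → ℕ}

def newEdges (g : FGraph) (ν : Finset ℕ → ℕ) : Finset (Finset ℕ) :=
  g.tfX.biUnion fun e => e.image fun v => {ν e, v}

def grow (g : FGraph) (ν : Finset ℕ → ℕ) : FGraph :=
  ⟨g.V ∪ g.tfX.image ν, g.E ∪ g.newEdges ν⟩

theorem TFStep.exists_eq_grow {g' : FGraph} (hs : g.TFStep g') :
    ∃ ν : Finset ℕ → ℕ, Set.InjOn ν ↑g.tfX ∧ (∀ e ∈ g.tfX, ν e ∉ g.V) ∧ g' = g.grow ν := by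
  obtain ⟨ν, hinj, hfresh, hV, hE⟩ := hs
  exact ⟨ν, hinj, hfresh, by cases g'; simp_all [grow, newEdges]⟩

theorem mem_of_mem_tfX {e : Finset ℕ} (he : e ∈ g.tfX) : e ∈ g.E :=
  (Finset.mem_filter.1 he).1

theorem mem_newEdges {f : Finset ℕ} :
    f ∈ g.newEdges ν ↔ ∃ e ∈ g.tfX, ∃ v ∈ e, {ν e, v} = f := by
  simp [newEdges]

theorem degree_le_degree_of_subset {g' : FGraph} (h : g.E ⊆ g'.E) (v : ℕ) :
    g.degree v ≤ g'.degree v :=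
  Finset.card_le_card (Finset.filter_subset_filter _ h)

theorem ne_of_mem_tfX (hwf : g.WF) (hfresh : ∀ e ∈ g.tfX, ν e ∉ g.V) {e e' : Finset ℕ}
    (he : e ∈ g.tfX) (he' : e' ∈ g.tfX) {v : ℕ} (hv : v ∈ e') : ν e ≠ v := by
  rintro rfl
  exact hfresh e he ((hwf e' (mem_of_mem_tfX he')).2 hv)

theorem newEdge_inj (hwf : g.WF) (hfresh : ∀ e ∈ g.tfX, ν e ∉ g.V) (hinj : Set.InjOn ν ↑g.tfX)
    {e e' : Finset ℕ} (he : e ∈ g.tfX) (he' : e' ∈ g.tfX) {v w : ℕ} (hw : w ∈ e')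
    (h : ({ν e, v} : Finset ℕ) = {ν e', w}) : e = e' ∧ v = w := by
  obtain ⟨hν, rfl⟩ := Finset.eq_and_eq_of_pair_eq_pair h (ne_of_mem_tfX hwf hfresh he he' hw)
  exact ⟨hinj he he' hν, rfl⟩

theorem card_image_newEdge (hwf : g.WF) (hfresh : ∀ e ∈ g.tfX, ν e ∉ g.V)
    (hinj : Set.InjOn ν ↑g.tfX) {e : Finset ℕ} (he : e ∈ g.tfX) :
    (e.image fun v => ({ν e, v} : Finset ℕ)).card = 2 := by
  rw [Finset.card_image_of_injOn fun v _ w hw h => (newEdge_inj hwf hfresh hinj he he hw h).2]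
  exact (hwf e (mem_of_mem_tfX he)).1

theorem card_newEdges (hwf : g.WF) (hfresh : ∀ e ∈ g.tfX, ν e ∉ g.V)
    (hinj : Set.InjOn ν ↑g.tfX) : (g.newEdges ν).card = 2 * g.tfX.card := by
  have hdisj : (g.tfX : Set (Finset ℕ)).PairwiseDisjoint
      fun e => e.image fun v => ({ν e, v} : Finset ℕ) := by
    intro e he e' he' hne
    simp only [Function.onFun, Finset.disjoint_left, Finset.mem_image]
    rintro _ ⟨v, -, rfl⟩ ⟨w, hw, h⟩
    exact hne (newEdge_inj hwf hfresh hinj he he' hw h.symm).1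
  rw [newEdges, Finset.card_biUnion hdisj,
    Finset.sum_congr rfl fun e he => card_image_newEdge hwf hfresh hinj he,
    Finset.sum_const, smul_eq_mul, mul_comm]

theorem disjoint_E_newEdges (hwf : g.WF) (hfresh : ∀ e ∈ g.tfX, ν e ∉ g.V) :
    Disjoint g.E (g.newEdges ν) := by
  rw [Finset.disjoint_right]
  intro f hf hfE
  obtain ⟨e, he, v, -, rfl⟩ := mem_newEdges.1 hf
  exact hfresh e he ((hwf _ hfE).2 (Finset.mem_insert_self _ _))

theorem card_grow_V (hfresh : ∀ e ∈ g.tfX, ν e ∉ g.V) (hinj : Set.InjOn ν ↑g.tfX) :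
    (g.grow ν).V.card = g.V.card + g.tfX.card := by
  have hdisj : Disjoint g.V (g.tfX.image ν) := by
    rw [Finset.disjoint_right]
    rintro _ ha
    obtain ⟨e, he, rfl⟩ := Finset.mem_image.1 ha
    exact hfresh e he
  rw [grow, Finset.card_union_of_disjoint hdisj, Finset.card_image_of_injOn hinj]

theorem card_grow_E (hwf : g.WF) (hfresh : ∀ e ∈ g.tfX, ν e ∉ g.V)
    (hinj : Set.InjOn ν ↑g.tfX) : (g.grow ν).E.card = g.E.card + 2 * g.tfX.card := by
  rw [grow, Finset.card_union_of_disjoint (disjoint_E_newEdges hwf hfresh),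
    card_newEdges hwf hfresh hinj]

theorem wf_grow (hwf : g.WF) (hfresh : ∀ e ∈ g.tfX, ν e ∉ g.V) : (g.grow ν).WF := by
  intro f hf
  rcases Finset.mem_union.1 hf with hf | hf
  · exact ⟨(hwf f hf).1, (hwf f hf).2.trans Finset.subset_union_left⟩
  · obtain ⟨e, he, v, hv, rfl⟩ := mem_newEdges.1 hf
    refine ⟨Finset.card_pair (ne_of_mem_tfX hwf hfresh he he hv), ?_⟩
    rw [Finset.insert_subset_iff, Finset.singleton_subset_iff]
    exact ⟨Finset.mem_union_right _ (Finset.mem_image_of_mem ν he),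
      Finset.mem_union_left _ ((hwf e (mem_of_mem_tfX he)).2 hv)⟩

theorem degree_grow (hwf : g.WF) (hfresh : ∀ e ∈ g.tfX, ν e ∉ g.V) (w : ℕ) :
    (g.grow ν).degree w = g.degree w + ((g.newEdges ν).filter (w ∈ ·)).card := by
  rw [degree, degree, grow, Finset.filter_union,
    Finset.card_union_of_disjoint (Finset.disjoint_filter_filter (disjoint_E_newEdges hwf hfresh))]

theorem degree_grow_new (hwf : g.WF) (hfresh : ∀ e ∈ g.tfX, ν e ∉ g.V)
    (hinj : Set.InjOn ν ↑g.tfX) {e : Finset ℕ} (he : e ∈ g.tfX) :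
    (g.grow ν).degree (ν e) = 2 := by
  have hν : ∀ f ∈ g.E, ν e ∉ f := fun f hf hνf => hfresh e he ((hwf f hf).2 hνf)
  suffices (g.newEdges ν).filter (ν e ∈ ·) = e.image fun v => {ν e, v} by
    rw [degree_grow hwf hfresh, this, card_image_newEdge hwf hfresh hinj he, degree,
      Finset.filter_false_of_mem hν, Finset.card_empty, zero_add]
  ext f
  simp only [Finset.mem_filter, mem_newEdges, Finset.mem_image]
  constructor
  · rintro ⟨⟨e', he', v, hv, rfl⟩, hνf⟩
    rcases Finset.mem_insert.1 hνf with h | h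
    · obtain rfl := hinj he he' h
      exact ⟨v, hv, rfl⟩
    · exact absurd (Finset.mem_singleton.1 h) (ne_of_mem_tfX hwf hfresh he he' hv)
  · rintro ⟨v, hv, rfl⟩
    exact ⟨⟨e, he, v, hv, rfl⟩, Finset.mem_insert_self _ _⟩

theorem degree_grow_ne_two (hwf : g.WF) (hfresh : ∀ e ∈ g.tfX, ν e ∉ g.V)
    (hinj : Set.InjOn ν ↑g.tfX) {w : ℕ} (hdeg : 2 ≤ g.degree w) :
    (g.grow ν).degree w ≠ 2 := by
  rw [degree_grow hwf hfresh]
  rcases hdeg.eq_or_lt with h2 | h3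
  · -- the two edges at `w` lie in `X`, and each carries a new edge at `w`
    have hmaps : Set.MapsTo (fun e => ({ν e, w} : Finset ℕ)) ↑(g.E.filter (w ∈ ·))
        ↑((g.newEdges ν).filter (w ∈ ·)) := by
      intro e he
      obtain ⟨heE, hwe⟩ := Finset.mem_filter.1 he
      have heX : e ∈ g.tfX := Finset.mem_filter.2 ⟨heE, w, hwe, h2.symm⟩
      exact Finset.mem_filter.2 ⟨mem_newEdges.2 ⟨e, heX, w, hwe, rfl⟩, by simp⟩
    have hinj' : Set.InjOn (fun e => ({ν e, w} : Finset ℕ)) ↑(g.E.filter (w ∈ ·)) := by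
      intro e he e' he' h
      obtain ⟨heE, hwe⟩ := Finset.mem_filter.1 he
      obtain ⟨heE', hwe'⟩ := Finset.mem_filter.1 he'
      exact (newEdge_inj hwf hfresh hinj (Finset.mem_filter.2 ⟨heE, w, hwe, h2.symm⟩)
        (Finset.mem_filter.2 ⟨heE', w, hwe', h2.symm⟩) hwe' h).1
    have := Finset.card_le_card_of_injOn _ hmaps hinj'
    rw [← degree] at this
    omega
  · omega

theorem tfX_grow (hwf : g.WF) (hfresh : ∀ e ∈ g.tfX, ν e ∉ g.V) (hinj : Set.InjOn ν ↑g.tfX)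
    (hdeg : ∀ v ∈ g.V, 2 ≤ g.degree v) : (g.grow ν).tfX = g.newEdges ν := by
  ext f
  simp only [tfX, Finset.mem_filter]
  constructor
  · rintro ⟨hf, v, hv, hv2⟩
    rcases Finset.mem_union.1 hf with hf | hf
    · have hvV := (hwf f hf).2 hv
      exact absurd hv2 (degree_grow_ne_two hwf hfresh hinj (hdeg v hvV))
    · exact hf
  · intro hf
    obtain ⟨e, he, v, hv, rfl⟩ := mem_newEdges.1 hf
    exact ⟨Finset.mem_union_right _ hf, ν e, Finset.mem_insert_self _ _,
      degree_grow_new hwf hfresh hinj he⟩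

theorem two_le_degree_grow (hwf : g.WF) (hfresh : ∀ e ∈ g.tfX, ν e ∉ g.V)
    (hinj : Set.InjOn ν ↑g.tfX) (hdeg : ∀ v ∈ g.V, 2 ≤ g.degree v) :
    ∀ v ∈ (g.grow ν).V, 2 ≤ (g.grow ν).degree v := by
  intro v hv
  rcases Finset.mem_union.1 hv with hv | hv
  · exact (hdeg v hv).trans (degree_le_degree_of_subset Finset.subset_union_left v)
  · obtain ⟨e, he, rfl⟩ := Finset.mem_image.1 hv
    exact (degree_grow_new hwf hfresh hinj he).ge

theorem TFStep.wf_degree_card {g' : FGraph} (hwf : g.WF) (hdeg : ∀ v ∈ g.V, 2 ≤ g.degree v)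
    (hs : g.TFStep g') :
    g'.WF ∧ (∀ v ∈ g'.V, 2 ≤ g'.degree v) ∧ g'.tfX.card = 2 * g.tfX.card ∧
      g'.V.card = g.V.card + g.tfX.card ∧ g'.E.card = g.E.card + 2 * g.tfX.card := by
  obtain ⟨ν, hinj, hfresh, rfl⟩ := hs.exists_eq_grow
  exact ⟨wf_grow hwf hfresh, two_le_degree_grow hwf hfresh hinj hdeg,
    by rw [tfX_grow hwf hfresh hinj hdeg, card_newEdges hwf hfresh hinj],
    card_grow_V hfresh hinj, card_grow_E hwf hfresh hinj⟩

end FGraph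

theorem IsTF.wf_degree_card {n : ℕ} {g : FGraph} (h : IsTF n g) :
    g.WF ∧ (∀ v ∈ g.V, 2 ≤ g.degree v) ∧ 2 * g.tfX.card = 3 * 2 ^ n ∧
      g.V.card = g.tfX.card ∧ g.E.card + 3 = 2 * g.V.card := by
  induction h with
  | base g hV hE =>
    simp only [FGraph.WF, FGraph.degree, FGraph.tfX, hV, hE]
    decide
  | step n g g' _ hs ih =>
    obtain ⟨hwf, hdeg, hX, hV, hE⟩ := ih
    obtain ⟨hwf', hdeg', hX', hV', hE'⟩ := hs.wf_degree_card hwf hdeg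
    refine ⟨hwf', hdeg', ?_, ?_, ?_⟩
    · rw [pow_succ]; omega
    all_goals omega

theorem triangle_fractal_size_general (n : ℕ) (g : FGraph)
    (h : IsTF n g) :
    g.V.card = 2 ^ n + 2 ^ (n - 1) ∧
    g.E.card = 2 * (2 ^ n + 2 ^ (n - 1)) - 3 := by
  obtain ⟨-, -, hX, hV, hE⟩ := h.wf_degree_card
  cases n with
  | zero => omega
  | succ k =>
    rw [pow_succ] at hX ⊢
    rw [Nat.add_sub_cancel]
    omega

/-- For every `n ≥ 1`, the triangle fractal `tf_n` has
exactly `2^n + 2^{n-1}` nodes and exactly `2·(2^n + 2^{n-1}) − 3` edges. -/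
theorem triangle_fractal_size (n : ℕ) (hn : 1 ≤ n) (g : FGraph)
    (h : IsTF n g) :
    g.V.card = 2 ^ n + 2 ^ (n - 1) ∧
    g.E.card = 2 * (2 ^ n + 2 ^ (n - 1)) - 3 :=
  triangle_fractal_size_general n g h
end
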